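/- arXiv:2302.06657 — 3 statements merged into one kernel-verified Lean document; each statement's English description precedes it below -/
import Mathlib

section
/- Let 0<p<1, q=1-p, and let X_1,...,X_{2m-1} be i.i.d. Bernoulli(p) random variables (1 with probability p, 0 with probability q). For 1 ≤ n ≤ m, let A_n be the event that exactly one of X_n, X_{n+1}, ..., X_{n+m-1} equals 0. Then P(A_1 ∩ complement(A_2) ∩ ... ∩ complement(A_m)) = q p^{m-1} ( p^{m-1} + q·∑_{i=1}^{m-2}(1-p^i) + q ). -/
open MeasureTheory ProbabilityTheory Finset Filter

/-- Number of zeros (tails) among `X n, X (n+1), ..., X (n+m-1)`. -/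
def zerosCount {Ω : Type*} (X : ℕ → Ω → Bool) (n m : ℕ) (ω : Ω) : ℕ :=
  ((Finset.range m).filter (fun j => X (n + j) ω = false)).card

/-- The event that the window of length `m` starting at `n` contains exactly `T` zeros. -/
def contamRun {Ω : Type*} (X : ℕ → Ω → Bool) (T n m : ℕ) : Set Ω :=
  {ω | zerosCount X n m ω = T}

/-! Read the trials as a sequence `f : ℕ → Bool`. The first window `[1, m]` has a single zero,
at `k`, and the window starting at `n ∈ [2, m]` contains `[n ≤ k]` zeros from `[n, m]` plus those
of `[m + 1, n + m)`. For `k = 1` those later counts must never equal `1`; as they grow by steps of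
one, `f` is `true` on `[m + 1, 2m)`. For `k ≥ 2` the window at `2` forces `f (m + 1) = false`;
if moreover `k < m`, the window at `k + 1` needs one more zero in `[m + 2, m + k]`, and for `k = m`
nothing else is needed. The three cases are disjoint events fixed by finitely many trials, of
probabilities `q p^(2m-2)`, `q² p^(m-1) (1 - p^(k-1))` and `q² p^(m-1)`. -/

namespace ContamRun

def numZeros (f : ℕ → Bool) (s : Finset ℕ) : ℕ := #{i ∈ s | f i = false}

def pattern (O Z : Finset ℕ) : Set (ℕ → Bool) :=
  {f | (∀ i ∈ O, f i = true) ∧ ∀ i ∈ Z, f i = false}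

section Combinatorics

variable {f : ℕ → Bool} {s t O Z : Finset ℕ}

lemma numZeros_eq_zero_iff : numZeros f s = 0 ↔ ∀ i ∈ s, f i = true := by
  simp [numZeros, filter_eq_empty_iff]

lemma exists_false_of_numZeros_ne_zero (h : numZeros f s ≠ 0) : ∃ i ∈ s, f i = false := by
  simpa [numZeros_eq_zero_iff] using h

lemma numZeros_eq_one_iff : numZeros f s = 1 ↔ ∃ k ∈ s, f ∈ pattern (s.erase k) {k} := by
  simp only [numZeros, card_eq_one, eq_singleton_iff_unique_mem, mem_filter, pattern,
    Set.mem_ofPred_eq, mem_erase, mem_singleton, forall_eq]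
  refine exists_congr fun k => ⟨fun ⟨⟨hk, hfk⟩, huniq⟩ => ⟨hk, fun i ⟨hik, hi⟩ => ?_, hfk⟩,
    fun ⟨hk, hones, hfk⟩ => ⟨⟨hk, hfk⟩, fun i ⟨hi, hfi⟩ => ?_⟩⟩
  · by_contra hfi
    exact hik (huniq i ⟨hi, by simpa using hfi⟩)
  · by_contra hik
    simp [hones i ⟨hik, hi⟩] at hfi

lemma numZeros_union (h : Disjoint s t) : numZeros f (s ∪ t) = numZeros f s + numZeros f t := by
  rw [numZeros, filter_union, card_union_of_disjoint (disjoint_filter_filter h)]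
  rfl

lemma one_lt_numZeros {i j : ℕ} (hi : i ∈ s) (hj : j ∈ s) (hij : i ≠ j) (hfi : f i = false)
    (hfj : f j = false) : 1 < numZeros f s :=
  one_lt_card.2 ⟨i, mem_filter.2 ⟨hi, hfi⟩, j, mem_filter.2 ⟨hj, hfj⟩, hij⟩

lemma pattern_anti {O' Z' : Finset ℕ} (hO : O ⊆ O') (hZ : Z ⊆ Z') :
    pattern O' Z' ⊆ pattern O Z :=
  fun _ ⟨hones, hzeros⟩ => ⟨fun i hi => hones i (hO hi), fun i hi => hzeros i (hZ hi)⟩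

lemma numZeros_of_mem_pattern_erase {k : ℕ} (hf : f ∈ pattern (s.erase k) {k})
    (hts : t ⊆ s) : numZeros f t = if k ∈ t then 1 else 0 := by
  split_ifs with hkt
  · exact numZeros_eq_one_iff.2 ⟨k, hkt, pattern_anti (erase_subset_erase k hts) subset_rfl hf⟩
  · exact numZeros_eq_zero_iff.2 fun i hi =>
      hf.1 i (mem_erase.2 ⟨fun hik => hkt (hik ▸ hi), hts hi⟩)

/-- The first zero in `[a, b)` makes the count over `[a, j)` jump from `0` to `1`. -/
lemma forall_true_of_numZeros_Ico_ne_one {a b : ℕ}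
    (h : ∀ j ∈ Ioc a b, numZeros f (Ico a j) ≠ 1) : ∀ i ∈ Ico a b, f i = true := by
  by_contra! hex
  have hex' : ∃ i, i ∈ Ico a b ∧ f i = false := by simpa using hex
  let i := Nat.find hex'
  obtain ⟨hi, hfi⟩ : i ∈ Ico a b ∧ f i = false := Nat.find_spec hex'
  rw [mem_Ico] at hi
  refine h (i + 1) (mem_Ioc.2 ⟨by omega, by omega⟩) (numZeros_eq_one_iff.2
    ⟨i, mem_Ico.2 ⟨hi.1, by omega⟩, fun j hj => ?_, by simpa using hfi⟩)
  rw [mem_erase, mem_Ico] at hj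
  by_contra hfj
  exact Nat.find_min hex' (show j < i by omega) ⟨mem_Ico.2 ⟨hj.2.1, by omega⟩, by simpa using hfj⟩

end Combinatorics

section Decomposition

variable {m : ℕ}

def firstRunOnly (m : ℕ) : Set (ℕ → Bool) :=
  {f | numZeros f (Ico 1 (m + 1)) = 1 ∧ ∀ n ∈ Icc 2 m, numZeros f (Ico n (n + m)) ≠ 1}

def zeroAtStart (m : ℕ) : Set (ℕ → Bool) := pattern (Ioo 1 (2 * m)) {1}

/-- The zero of the first window sits at `i + 1`, so that `i` is the summation index of the
formula. -/
def zeroInside (m i : ℕ) : Set (ℕ → Bool) :=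
  pattern ((Ico 1 (m + 1)).erase (i + 1)) {i + 1, m + 1} ∩
    {f | ∃ j ∈ Ico (m + 2) (m + 2 + i), f j = false}

def zeroAtEnd (m : ℕ) : Set (ℕ → Bool) := pattern (Ico 1 m) {m, m + 1}

lemma numZeros_window {f : ℕ → Bool} {k n : ℕ} (hk : k ≤ m)
    (hf : f ∈ pattern ((Ico 1 (m + 1)).erase k) {k}) (hn : 1 ≤ n) (hnm : n ≤ m + 1) :
    numZeros f (Ico n (n + m)) = (if n ≤ k then 1 else 0) + numZeros f (Ico (m + 1) (n + m)) := by
  rw [← Ico_union_Ico_eq_Ico hnm (by omega), numZeros_union (Ico_disjoint_Ico_consecutive _ _ _),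
    numZeros_of_mem_pattern_erase hf (Ico_subset_Ico_left hn)]
  simp only [mem_Ico]
  congr 1
  exact if_congr (by omega) rfl rfl

lemma firstRunOnly_subset (hm : 2 ≤ m) :
    firstRunOnly m ⊆ (zeroAtStart m ∪ ⋃ i ∈ Icc 1 (m - 2), zeroInside m i) ∪ zeroAtEnd m := by
  rintro f ⟨hfirst, hlater⟩
  obtain ⟨k, hk, hfk⟩ := numZeros_eq_one_iff.1 hfirst
  rw [mem_Ico] at hk
  have hones : ∀ i ∈ Ico 1 (m + 1), i ≠ k → f i = true :=
    fun i hi hik => hfk.1 i (mem_erase.2 ⟨hik, hi⟩)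
  have hfk0 : f k = false := hfk.2 k (mem_singleton_self k)
  have hsplit : ∀ n, 2 ≤ n → n ≤ m →
      (if n ≤ k then 1 else 0) + numZeros f (Ico (m + 1) (n + m)) ≠ 1 := fun n hn hnm => by
    rw [← numZeros_window (by omega) hfk (by omega) (by omega)]
    exact hlater n (mem_Icc.2 ⟨hn, hnm⟩)
  rcases (by omega : k = 1 ∨ 2 ≤ k) with rfl | hk2
  · have htail : ∀ i ∈ Ico (m + 1) (2 * m), f i = true :=
      forall_true_of_numZeros_Ico_ne_one fun j hj => by
        rw [mem_Ioc] at hj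
        have := hsplit (j - m) (by omega) (by omega)
        rwa [if_neg (by omega), show j - m + m = j by omega, zero_add] at this
    refine .inl (.inl ⟨fun i hi => ?_, by simpa using hfk0⟩)
    rw [mem_Ioo] at hi
    rcases le_or_gt i m with him | him
    · exact hones i (mem_Ico.2 ⟨by omega, by omega⟩) (by omega)
    · exact htail i (mem_Ico.2 ⟨by omega, by omega⟩)
  have hfm : f (m + 1) = false := by
    have := hsplit 2 le_rfl hm
    rw [if_pos hk2, show 2 + m = m + 1 + 1 by omega, Nat.Ico_succ_singleton] at this
    obtain ⟨i, hi, hfi⟩ := exists_false_of_numZeros_ne_zero (by omega : numZeros f {m + 1} ≠ 0)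
    rwa [mem_singleton.1 hi] at hfi
  rcases (by omega : k = m ∨ k < m) with rfl | hkm
  · refine .inr ⟨fun i hi => ?_, by simp [hfk0, hfm]⟩
    rw [mem_Ico] at hi
    exact hones i (mem_Ico.2 ⟨hi.1, by omega⟩) (by omega)
  obtain ⟨i, rfl⟩ : ∃ i, k = i + 1 := ⟨k - 1, by omega⟩
  refine .inl (.inr (Set.mem_iUnion₂.2 ⟨i, mem_Icc.2 ⟨by omega, by omega⟩, ?_⟩))
  refine ⟨⟨hfk.1, by simp [hfk0, hfm]⟩, exists_false_of_numZeros_ne_zero fun h => ?_⟩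
  have := hsplit (i + 2) (by omega) (by omega)
  rw [if_neg (by omega), zero_add, ← Ico_union_Ico_eq_Ico (b := m + 2) (by omega) (by omega),
    numZeros_union (Ico_disjoint_Ico_consecutive _ _ _), Nat.Ico_succ_singleton,
    show i + 2 + m = m + 2 + i by omega, h,
    numZeros_eq_one_iff.2 ⟨m + 1, mem_singleton_self _, by simp, by simp [hfm]⟩] at this
  exact this rfl

lemma zeroAtStart_subset (hm : 2 ≤ m) : zeroAtStart m ⊆ firstRunOnly m := by
  rintro f ⟨hones, hzero⟩
  refine ⟨numZeros_eq_one_iff.2 ⟨1, mem_Ico.2 ⟨le_rfl, by omega⟩, fun i hi => hones i ?_, hzero⟩,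
    fun n hn => ?_⟩
  · simp only [mem_erase, mem_Ico, mem_Ioo] at hi ⊢
    omega
  · rw [numZeros_eq_zero_iff.2 fun i hi => hones i ?_]
    · exact zero_ne_one
    · simp only [mem_Icc, mem_Ico, mem_Ioo] at hi hn ⊢
      omega

lemma zeroInside_subset {i : ℕ} (hi : i ∈ Icc 1 (m - 2)) : zeroInside m i ⊆ firstRunOnly m := by
  rintro f ⟨⟨hones, hzeros⟩, j, hj, hfj⟩
  simp only [mem_insert, mem_singleton, forall_eq_or_imp, forall_eq] at hzeros
  rw [mem_Icc] at hi
  rw [mem_Ico] at hj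
  refine ⟨numZeros_eq_one_iff.2 ⟨i + 1, mem_Ico.2 ⟨by omega, by omega⟩, hones, by simp [hzeros.1]⟩,
    fun n hn => ?_⟩
  rw [mem_Icc] at hn
  rcases le_or_gt n (i + 1) with hni | hni
  · exact (one_lt_numZeros (mem_Ico.2 ⟨hni, by omega⟩) (mem_Ico.2 ⟨by omega, by omega⟩)
      (by omega) hzeros.1 hzeros.2).ne'
  · exact (one_lt_numZeros (mem_Ico.2 ⟨by omega, by omega⟩) (mem_Ico.2 ⟨by omega, by omega⟩)
      (by omega) hzeros.2 hfj).ne'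

lemma zeroAtEnd_subset (hm : 2 ≤ m) : zeroAtEnd m ⊆ firstRunOnly m := by
  rintro f ⟨hones, hzeros⟩
  simp only [mem_insert, mem_singleton, forall_eq_or_imp, forall_eq] at hzeros
  refine ⟨numZeros_eq_one_iff.2 ⟨m, mem_Ico.2 ⟨by omega, by omega⟩, fun i hi => hones i ?_,
    by simp [hzeros.1]⟩, fun n hn => ?_⟩
  · simp only [mem_erase, mem_Ico] at hi ⊢
    omega
  · rw [mem_Icc] at hn
    exact (one_lt_numZeros (mem_Ico.2 ⟨hn.2, by omega⟩) (mem_Ico.2 ⟨by omega, by omega⟩)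
      (by omega) hzeros.1 hzeros.2).ne'

lemma firstRunOnly_eq (hm : 2 ≤ m) :
    firstRunOnly m = (zeroAtStart m ∪ ⋃ i ∈ Icc 1 (m - 2), zeroInside m i) ∪ zeroAtEnd m :=
  (firstRunOnly_subset hm).antisymm <| Set.union_subset
    (Set.union_subset (zeroAtStart_subset hm) (Set.iUnion₂_subset fun _ hi => zeroInside_subset hi))
    (zeroAtEnd_subset hm)

end Decomposition

section SequenceSpace

lemma measurableSet_pattern (O Z : Finset ℕ) : MeasurableSet (pattern O Z) := by
  unfold pattern
  measurability

lemma pattern_inter_exists_false {O Z G : Finset ℕ} :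
    pattern O Z ∩ {f | ∃ j ∈ G, f j = false} = pattern O Z \ pattern (O ∪ G) Z := by
  ext f
  simp only [pattern, Set.mem_inter_iff, Set.mem_sdiff, Set.mem_ofPred_eq, mem_union]
  grind

lemma disjoint_pattern {O Z O' Z' : Finset ℕ} {i : ℕ} (hO : i ∈ O) (hZ' : i ∈ Z') :
    Disjoint (pattern O Z) (pattern O' Z') :=
  Set.disjoint_left.2 fun f hf hf' => by simpa [hf.1 i hO] using hf'.2 i hZ'

lemma measurableSet_zeroInside (m i : ℕ) : MeasurableSet (zeroInside m i) := by
  rw [zeroInside, pattern_inter_exists_false]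
  exact (measurableSet_pattern _ _).diff (measurableSet_pattern _ _)

lemma measurableSet_firstRunOnly {m : ℕ} (hm : 2 ≤ m) : MeasurableSet (firstRunOnly m) := by
  rw [firstRunOnly_eq hm]
  exact ((measurableSet_pattern _ _).union ((Icc 1 (m - 2)).measurableSet_biUnion
    fun i _ => measurableSet_zeroInside m i)).union (measurableSet_pattern _ _)

def HasPatternProb (ν : Measure (ℕ → Bool)) (p q : ℝ) : Prop :=
  ∀ O Z : Finset ℕ, Disjoint O Z → ν.real (pattern O Z) = p ^ #O * q ^ #Z

variable {ν : Measure (ℕ → Bool)} {p q : ℝ} {m : ℕ}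

lemma measureReal_zeroAtStart
    (hν : HasPatternProb ν p q) (hm : 2 ≤ m) :
    ν.real (zeroAtStart m) = p ^ (m - 1) * p ^ (m - 1) * q := by
  rw [zeroAtStart, hν _ _ (by simp), Nat.card_Ioo, card_singleton, pow_one, ← pow_add]
  congr 2
  omega

lemma measureReal_zeroInside [IsFiniteMeasure ν]
    (hν : HasPatternProb ν p q) {i : ℕ}
    (hi : i ∈ Icc 1 (m - 2)) : ν.real (zeroInside m i) = p ^ (m - 1) * q ^ 2 * (1 - p ^ i) := by
  rw [mem_Icc] at hi
  set O := (Ico 1 (m + 1)).erase (i + 1)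
  have hOZ : Disjoint O {i + 1, m + 1} := by simp [O]
  have hOG : Disjoint O (Ico (m + 2) (m + 2 + i)) :=
    disjoint_left.2 fun j hj hj' => by simp only [O, mem_erase, mem_Ico] at hj hj'; omega
  have hGZ : Disjoint (O ∪ Ico (m + 2) (m + 2 + i)) {i + 1, m + 1} := by
    simp only [disjoint_union_left, hOZ, true_and]
    simp only [disjoint_insert_right, mem_Ico, disjoint_singleton_right]
    omega
  have hO : #O = m - 1 := by
    rw [card_erase_of_mem (mem_Ico.2 ⟨by omega, by omega⟩), Nat.card_Ico]
    omega
  rw [zeroInside, pattern_inter_exists_false,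
    measureReal_sdiff (pattern_anti subset_union_left subset_rfl) (measurableSet_pattern _ _),
    hν _ _ hOZ, hν _ _ hGZ, card_union_of_disjoint hOG, hO, Nat.card_Ico,
    card_pair (by omega), show m + 2 + i - (m + 2) = i by omega, pow_add]
  ring

lemma measureReal_zeroAtEnd
    (hν : HasPatternProb ν p q) :
    ν.real (zeroAtEnd m) = p ^ (m - 1) * q ^ 2 := by
  rw [zeroAtEnd, hν _ _ (by simp), Nat.card_Ico, card_pair (by omega)]

theorem measureReal_firstRunOnly [IsFiniteMeasure ν]
    (hν : HasPatternProb ν p q) (hm : 2 ≤ m) :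
    ν.real (firstRunOnly m) =
      q * p ^ (m - 1) * (p ^ (m - 1) + q * ∑ i ∈ Icc 1 (m - 2), (1 - p ^ i) + q) := by
  have hInside : ∀ i ∈ Icc 1 (m - 2), MeasurableSet (zeroInside m i) :=
    fun i _ => measurableSet_zeroInside m i
  have hStart_Inside : Disjoint (zeroAtStart m) (⋃ i ∈ Icc 1 (m - 2), zeroInside m i) :=
    Set.disjoint_iUnion₂_right.2 fun i hi => (disjoint_pattern (i := m + 1)
      (mem_Ioo.2 ⟨by omega, by omega⟩) (by simp)).mono_right Set.inter_subset_left
  have hInside_pairwise : (Icc 1 (m - 2) : Set ℕ).PairwiseDisjoint (zeroInside m) :=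
    fun i _ j hj hij => by
      rw [mem_coe, mem_Icc] at hj
      exact (disjoint_pattern (i := j + 1) (mem_erase.2 ⟨by omega, mem_Ico.2 ⟨by omega, by omega⟩⟩)
        (by simp)).mono Set.inter_subset_left Set.inter_subset_left
  have hEnd : Disjoint (zeroAtStart m ∪ ⋃ i ∈ Icc 1 (m - 2), zeroInside m i) (zeroAtEnd m) := by
    refine Set.disjoint_union_left.2 ⟨disjoint_pattern (i := m + 1)
      (mem_Ioo.2 ⟨by omega, by omega⟩) (by simp), Set.disjoint_iUnion₂_left.2 fun i hi => ?_⟩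
    rw [mem_Icc] at hi
    exact (disjoint_pattern (i := m) (mem_erase.2 ⟨by omega, mem_Ico.2 ⟨by omega, by omega⟩⟩)
      (by simp)).mono_left Set.inter_subset_left
  rw [firstRunOnly_eq hm, measureReal_union hEnd (measurableSet_pattern _ _),
    measureReal_union hStart_Inside ((Icc 1 (m - 2)).measurableSet_biUnion hInside)
      (measure_ne_top _ _) (measure_ne_top _ _),
    measureReal_biUnion_finset hInside_pairwise hInside, measureReal_zeroAtStart hν hm,
    sum_congr rfl fun i hi => measureReal_zeroInside hν hi, measureReal_zeroAtEnd hν, ← mul_sum]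
  ring

end SequenceSpace

section Trials

variable {Ω : Type*} {X : ℕ → Ω → Bool}

lemma zerosCount_eq_numZeros (n m : ℕ) (ω : Ω) :
    zerosCount X n m ω = numZeros (fun i => X i ω) (Ico n (n + m)) := by
  have hwindow : Ico n (n + m) = (range m).map (addLeftEmbedding n) := by
    rw [range_eq_Ico, map_add_left_Ico, add_zero]
  rw [numZeros, hwindow, filter_map, card_map]
  rfl

lemma contamRun_inter_iInter_compl (m : ℕ) :
    contamRun X 1 1 m ∩ ⋂ n ∈ Icc 2 m, (contamRun X 1 n m)ᶜ =
      (fun ω i => X i ω) ⁻¹' firstRunOnly m := by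
  ext ω
  simp only [contamRun, firstRunOnly, zerosCount_eq_numZeros, add_comm 1 m, Set.mem_inter_iff,
    Set.mem_iInter, Set.mem_compl_iff, Set.mem_ofPred_eq, Set.mem_preimage]

lemma hasPatternProb_map [MeasurableSpace Ω] {μ : Measure Ω} [IsProbabilityMeasure μ]
    (hmeas : ∀ i, Measurable (X i)) (hindep : iIndepFun X μ) {p : ℝ}
    (hX : ∀ i, μ.real {ω | X i ω = true} = p) :
    HasPatternProb (μ.map fun ω i => X i ω) p (1 - p) := by
  intro O Z hOZ
  have hfalse : ∀ i, μ.real (X i ⁻¹' {false}) = 1 - p := fun i => by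
    have htrue : MeasurableSet {ω | X i ω = true} := (hmeas i) (measurableSet_singleton true)
    rw [← hX i, ← probReal_compl_eq_one_sub htrue]
    congr 1
    ext ω
    simp
  have hpreimage : (fun ω i => X i ω) ⁻¹' pattern O Z = ⋂ i ∈ O ∪ Z, X i ⁻¹' {decide (i ∈ O)} := by
    ext ω
    simp only [pattern, Set.mem_preimage, Set.mem_ofPred_eq, Set.mem_iInter, mem_union,
      Set.mem_singleton_iff]
    grind [disjoint_left]
  rw [map_measureReal_apply (measurable_pi_lambda _ hmeas) (measurableSet_pattern O Z), hpreimage,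
    measureReal_def, hindep.meas_biInter fun i _ => ⟨{decide (i ∈ O)}, trivial, rfl⟩,
    ENNReal.toReal_prod, prod_union hOZ]
  simp only [← measureReal_def]
  have hones : ∀ i ∈ O, μ.real (X i ⁻¹' {decide (i ∈ O)}) = p := fun i hi => by
    rw [decide_eq_true hi]
    exact hX i
  have hzeros : ∀ i ∈ Z, μ.real (X i ⁻¹' {decide (i ∈ O)}) = 1 - p := fun i hi => by
    rw [decide_eq_false (disjoint_right.1 hOZ hi), hfalse]
  rw [prod_congr rfl hones, prod_congr rfl hzeros, prod_const, prod_const]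

end Trials

end ContamRun

open ContamRun in
theorem stmt0_general {Ω : Type*} [MeasurableSpace Ω] (μ : Measure Ω) [IsProbabilityMeasure μ]
    (X : ℕ → Ω → Bool) (hmeas : ∀ i, Measurable (X i))
    (hindep : iIndepFun X μ)
    (p q : ℝ) (hp : 0 < p) (hq : q = 1 - p)
    (hX : ∀ i, μ {ω | X i ω = true} = ENNReal.ofReal p)
    (m : ℕ) (hm : 2 ≤ m) :
    (μ (contamRun X 1 1 m ∩ ⋂ n ∈ Finset.Icc 2 m, (contamRun X 1 n m)ᶜ)).toReal =
      q * p ^ (m - 1) *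
        (p ^ (m - 1) + q * ∑ i ∈ Finset.Icc 1 (m - 2), (1 - p ^ i) + q) := by
  have hXreal : ∀ i, μ.real {ω | X i ω = true} = p := fun i => by
    rw [measureReal_def, hX, ENNReal.toReal_ofReal hp.le]
  rw [← measureReal_def, contamRun_inter_iInter_compl,
    ← map_measureReal_apply (measurable_pi_lambda _ hmeas) (measurableSet_firstRunOnly hm)]
  exact measureReal_firstRunOnly (hq ▸ hasPatternProb_map hmeas hindep hXreal) hm

theorem stmt0 {Ω : Type*} [MeasurableSpace Ω] (μ : Measure Ω) [IsProbabilityMeasure μ]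
    (X : ℕ → Ω → Bool) (hmeas : ∀ i, Measurable (X i))
    (hindep : iIndepFun X μ)
    (p q : ℝ) (hp : 0 < p) (hp1 : p < 1) (hq : q = 1 - p)
    (hX : ∀ i, μ {ω | X i ω = true} = ENNReal.ofReal p)
    (m : ℕ) (hm : 2 ≤ m) :
    (μ (contamRun X 1 1 m ∩ ⋂ n ∈ Finset.Icc 2 m, (contamRun X 1 n m)ᶜ)).toReal =
      q * p ^ (m - 1) *
        (p ^ (m - 1) + q * ∑ i ∈ Finset.Icc 1 (m - 2), (1 - p ^ i) + q) :=
  stmt0_general μ X hmeas hindep p q hp hq hX m hm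
end

section
/- Let 0<p<1, q=1-p, and let X_1,X_2,... be i.i.d. Bernoulli(p). For m ≥ 2 and T=1, let A_n be the event that exactly one of X_n,...,X_{n+m-1} is 0. Then the conditional probability P(complement(A_2) ∩ ... ∩ complement(A_m) | A_1) = q + (2p^{m-1} - 1)/m. -/
open MeasureTheory ProbabilityTheory Finset Filter

section ZeroSet

variable {Ω : Type*} (X : ℕ → Ω → Bool)

def zeroSet (s : Finset ℕ) (ω : Ω) : Finset ℕ := {i ∈ s | X i ω = false}

def zeroPattern (s t : Finset ℕ) : Set Ω := {ω | zeroSet X s ω = t}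

def noLaterRun (m : ℕ) : Set Ω := ⋂ n ∈ Icc 2 m, (contamRun X 1 n m)ᶜ

variable {X} {s s' t t' : Finset ℕ} {ω : Ω}

lemma mem_zeroSet {i : ℕ} : i ∈ zeroSet X s ω ↔ i ∈ s ∧ X i ω = false := mem_filter

lemma zerosCount_eq_card_zeroSet (n m : ℕ) (ω : Ω) :
    zerosCount X n m ω = #(zeroSet X (Ico n (n + m)) ω) := by
  have hIco : Ico n (n + m) = (range m).map (addLeftEmbedding n) := by
    rw [range_eq_Ico, map_add_left_Ico, add_zero]
  rw [zerosCount, zeroSet, hIco, filter_map, card_map]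
  rfl

lemma zeroSet_inter_of_subset (h : s' ⊆ s) : zeroSet X s ω ∩ s' = zeroSet X s' ω := by
  ext i
  simp only [mem_inter, mem_zeroSet]
  exact ⟨fun ⟨⟨_, hx⟩, hi⟩ => ⟨hi, hx⟩, fun ⟨hi, hx⟩ => ⟨⟨h hi, hx⟩, hi⟩⟩

lemma zeroSet_Ico_add_one {a b : ℕ} (h : a ≤ b) :
    zeroSet X (Ico a (b + 1)) ω =
      if X b ω = false then insert b (zeroSet X (Ico a b) ω) else zeroSet X (Ico a b) ω := by
  rw [zeroSet, ← insert_Ico_right_eq_Ico_add_one h, filter_insert]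
  rfl

lemma zeroPattern_subset (hs : s' ⊆ s) (ht : t ∩ s' = t') :
    zeroPattern X s t ⊆ zeroPattern X s' t' := fun ω hω => by
  rw [zeroPattern, Set.mem_ofPred_eq, ← zeroSet_inter_of_subset hs, hω, ht]

lemma zeroPattern_eq_biInter (s t : Finset ℕ) :
    zeroPattern X s t = ⋂ i ∈ s ∪ t, X i ⁻¹' {b | i ∈ s ∧ b = false ↔ i ∈ t} := by
  ext ω
  simp only [zeroPattern, Set.mem_ofPred_eq, Set.mem_iInter, Set.mem_preimage, Finset.ext_iff,
    mem_zeroSet, mem_union]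
  exact ⟨fun h i _ => h i, fun h i => if hi : i ∈ s ∨ i ∈ t then h i hi else by tauto⟩

lemma disjoint_zeroPattern (h : t ≠ t') : Disjoint (zeroPattern X s t) (zeroPattern X s t') :=
  Set.disjoint_left.mpr fun _ hω hω' => h (hω.symm.trans hω')

lemma mem_contamRun_iff_of_mem_zeroPattern {T n m : ℕ} (hω : ω ∈ zeroPattern X s t)
    (hs : Ico n (n + m) ⊆ s) : ω ∈ contamRun X T n m ↔ #(t ∩ Ico n (n + m)) = T := by
  rw [contamRun, Set.mem_ofPred_eq, zerosCount_eq_card_zeroSet, ← zeroSet_inter_of_subset hs,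
    show zeroSet X s ω = t from hω]

lemma notMem_contamRun_one {n m a b : ℕ} (hab : a ≠ b) (ha : a ∈ Ico n (n + m))
    (hb : b ∈ Ico n (n + m)) (hXa : X a ω = false) (hXb : X b ω = false) :
    ω ∉ contamRun X 1 n m := by
  have hsub : {a, b} ⊆ zeroSet X (Ico n (n + m)) ω := by
    simp only [insert_subset_iff, singleton_subset_iff, mem_zeroSet]
    exact ⟨⟨ha, hXa⟩, hb, hXb⟩
  have htwo := card_le_card hsub
  rw [card_pair hab] at htwo
  rw [contamRun, Set.mem_ofPred_eq, zerosCount_eq_card_zeroSet]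
  omega

lemma contamRun_one_eq_biUnion (n m : ℕ) :
    contamRun X 1 n m = ⋃ a ∈ Ico n (n + m), zeroPattern X (Ico n (n + m)) {a} := by
  ext ω
  simp only [contamRun, zeroPattern, Set.mem_ofPred_eq, Set.mem_iUnion, exists_prop,
    zerosCount_eq_card_zeroSet, card_eq_one]
  constructor
  · rintro ⟨a, ha⟩
    exact ⟨a, (mem_zeroSet.mp (ha ▸ mem_singleton_self a)).1, ha⟩
  · rintro ⟨a, -, ha⟩
    exact ⟨a, ha⟩

end ZeroSet

section Decomposition

variable {Ω : Type*} {X : ℕ → Ω → Bool} {m a : ℕ}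

lemma zeroPattern_one_inter_noLaterRun (hm : 2 ≤ m) :
    zeroPattern X (Ico 1 (m + 1)) {1} ∩ noLaterRun X m = zeroPattern X (Ico 1 (2 * m)) {1} := by
  ext ω
  simp only [noLaterRun, Set.mem_inter_iff, Set.mem_iInter, Set.mem_compl_iff, mem_Icc]
  constructor
  · rintro ⟨hfirst, hlater⟩
    -- a zero at `m + 1 + k` would be the only zero of the window starting at `k + 2`
    have hgrow : ∀ k ≤ m - 1, ω ∈ zeroPattern X (Ico 1 (m + 1 + k)) {1} := by
      intro k hk
      induction k with
      | zero => exact hfirst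
      | succ k ih =>
        have hω : zeroSet X (Ico 1 (m + 1 + k + 1)) ω =
            if X (m + 1 + k) ω = false then {m + 1 + k, 1} else {1} := by
          rw [zeroSet_Ico_add_one (by omega), ih (by omega)]
        split_ifs at hω
        · refine absurd ?_ (hlater (k + 2) ⟨by omega, by omega⟩)
          rw [mem_contamRun_iff_of_mem_zeroPattern hω (Ico_subset_Ico (by omega) (by omega)),
            card_eq_one]
          exact ⟨m + 1 + k, by
            ext i; simp only [mem_inter, mem_insert, mem_singleton, mem_Ico]; omega⟩
        · exact hω
    simpa only [show m + 1 + (m - 1) = 2 * m by omega] using hgrow (m - 1) le_rfl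
  · intro hω
    refine ⟨zeroPattern_subset (Ico_subset_Ico le_rfl (by omega))
      (inter_eq_left.mpr (by simp only [singleton_subset_iff, mem_Ico]; omega)) hω, fun n hn => ?_⟩
    rw [mem_contamRun_iff_of_mem_zeroPattern hω (Ico_subset_Ico (by omega) (by omega)),
      card_eq_one]
    rintro ⟨b, hb⟩
    have hb1 := hb ▸ mem_singleton_self b
    simp only [mem_inter, mem_singleton, mem_Ico] at hb1
    omega

lemma zeroPattern_inter_noLaterRun_subset (ha : 2 ≤ a) (ham : a ≤ m) :
    zeroPattern X (Ico 1 (m + 1)) {a} ∩ noLaterRun X m ⊆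
      zeroPattern X (Ico 1 (m + 2)) {a, m + 1} := by
  rintro ω ⟨hω, hlater⟩
  simp only [noLaterRun, Set.mem_iInter, Set.mem_compl_iff, mem_Icc] at hlater
  have hext : zeroSet X (Ico 1 (m + 1 + 1)) ω =
      if X (m + 1) ω = false then {m + 1, a} else {a} := by
    rw [zeroSet_Ico_add_one (by omega), show zeroSet X _ ω = {a} from hω]
  split_ifs at hext
  · rwa [pair_comm] at hext
  · -- otherwise `a` is the only zero of the window starting at `2`
    refine absurd ?_ (hlater 2 ⟨le_rfl, by omega⟩)
    rw [mem_contamRun_iff_of_mem_zeroPattern hext (Ico_subset_Ico (by omega) (by omega)),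
      card_eq_one]
    exact ⟨a, by ext i; simp only [mem_inter, mem_singleton, mem_Ico]; omega⟩

lemma zeroPattern_pair_subset (ha : 0 < a) (ham : a ≤ m) :
    zeroPattern X (Ico 1 (m + 2)) {a, m + 1} ⊆ zeroPattern X (Ico 1 (m + 1)) {a} :=
  zeroPattern_subset (Ico_subset_Ico le_rfl (by omega)) (by
    ext i; simp only [mem_inter, mem_insert, mem_singleton, mem_Ico]; omega)

lemma zeroPattern_inter_noLaterRun_of_lt (ha : 2 ≤ a) (ham : a < m) :
    zeroPattern X (Ico 1 (m + 1)) {a} ∩ noLaterRun X m =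
      zeroPattern X (Ico 1 (m + 2)) {a, m + 1} \ zeroPattern X (Ico 1 (m + a + 1)) {a, m + 1} := by
  ext ω
  constructor
  · intro hω
    refine ⟨zeroPattern_inter_noLaterRun_subset ha ham.le hω, fun hlong => ?_⟩
    -- then `m + 1` is the only zero of the window starting at `a + 1`
    refine Set.mem_iInter₂.mp hω.2 (a + 1) (mem_Icc.mpr ⟨by omega, by omega⟩) ?_
    rw [mem_contamRun_iff_of_mem_zeroPattern hlong (Ico_subset_Ico (by omega) (by omega)),
      card_eq_one]
    exact ⟨m + 1, by ext i; simp only [mem_inter, mem_insert, mem_singleton, mem_Ico]; omega⟩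
  · rintro ⟨hshort, hlong⟩
    have hzero : ∀ i ∈ ({a, m + 1} : Finset ℕ), X i ω = false := fun i hi =>
      (mem_zeroSet.mp ((show zeroSet X _ ω = _ from hshort) ▸ hi)).2
    obtain ⟨j, hj⟩ : (zeroSet X (Ico (m + 2) (m + a + 1)) ω).Nonempty := by
      rw [nonempty_iff_ne_empty]
      intro hempty
      refine hlong ?_
      rw [zeroPattern, Set.mem_ofPred_eq,
        ← Ico_union_Ico_eq_Ico (b := m + 2) (by omega) (by omega), zeroSet, filter_union,
        ← zeroSet, ← zeroSet, hempty, union_empty]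
      exact hshort
    rw [mem_zeroSet, mem_Ico] at hj
    refine ⟨zeroPattern_pair_subset (by omega) ham.le hshort, ?_⟩
    simp only [noLaterRun, Set.mem_iInter, mem_Icc]
    intro n hn
    rcases le_or_gt n a with hna | hna
    · exact notMem_contamRun_one (by omega) (mem_Ico.mpr ⟨by omega, by omega⟩)
        (mem_Ico.mpr ⟨by omega, by omega⟩) (hzero a (by simp)) (hzero (m + 1) (by simp))
    · exact notMem_contamRun_one (by omega) (mem_Ico.mpr ⟨by omega, by omega⟩)
        (mem_Ico.mpr ⟨by omega, by omega⟩) (hzero (m + 1) (by simp)) hj.2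

lemma zeroPattern_last_inter_noLaterRun (hm : 2 ≤ m) :
    zeroPattern X (Ico 1 (m + 1)) {m} ∩ noLaterRun X m =
      zeroPattern X (Ico 1 (m + 2)) {m, m + 1} := by
  refine (zeroPattern_inter_noLaterRun_subset hm le_rfl).antisymm fun ω hω => ?_
  have hzero : ∀ i ∈ ({m, m + 1} : Finset ℕ), X i ω = false := fun i hi =>
    (mem_zeroSet.mp ((show zeroSet X _ ω = _ from hω) ▸ hi)).2
  refine ⟨zeroPattern_pair_subset (by omega) le_rfl hω, ?_⟩
  simp only [noLaterRun, Set.mem_iInter, mem_Icc]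
  intro n hn
  exact notMem_contamRun_one (by omega) (mem_Ico.mpr ⟨by omega, by omega⟩)
    (mem_Ico.mpr ⟨by omega, by omega⟩) (hzero m (by simp)) (hzero (m + 1) (by simp))

end Decomposition

lemma isolatedRun_sum_identity (p : ℝ) {m : ℕ} (hm : 2 ≤ m) :
    p ^ (2 * m - 2) * (1 - p) +
        (∑ a ∈ Ico 2 m, (p ^ (m - 1) * (1 - p) ^ 2 - p ^ (m + a - 2) * (1 - p) ^ 2) +
          p ^ (m - 1) * (1 - p) ^ 2) =
      p ^ (m - 1) * (1 - p) * (m * (1 - p) + 2 * p ^ (m - 1) - 1) := by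
  obtain ⟨r, rfl⟩ := Nat.exists_eq_add_of_le' hm
  have hsum : ∑ a ∈ Ico 2 (r + 2),
        (p ^ (r + 2 - 1) * (1 - p) ^ 2 - p ^ (r + 2 + a - 2) * (1 - p) ^ 2) =
      r * (p ^ (r + 1) * (1 - p) ^ 2) - p ^ (r + 2) * (1 - p) ^ 2 * ∑ k ∈ range r, p ^ k := by
    rw [sum_Ico_eq_sum_range, Nat.add_sub_cancel, sum_sub_distrib, sum_const, card_range,
      nsmul_eq_mul, mul_sum]
    congr 1
    refine sum_congr rfl fun k _ => ?_
    rw [show r + 2 + (2 + k) - 2 = r + 2 + k by omega, pow_add]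
    ring
  rw [hsum, show 2 * (r + 2) - 2 = 2 * r + 2 by omega, show r + 2 - 1 = r + 1 by omega]
  push_cast
  linear_combination (-(p ^ (r + 2) * (1 - p))) * geom_sum_mul_neg p r

section Probability

variable {Ω : Type*} [MeasurableSpace Ω] {μ : Measure Ω} [IsProbabilityMeasure μ]
  {X : ℕ → Ω → Bool} {p : ℝ} {s t : Finset ℕ} {m : ℕ}

lemma measurableSet_zeroPattern (hmeas : ∀ i, Measurable (X i)) (s t : Finset ℕ) :
    MeasurableSet (zeroPattern X s t) := by
  rw [zeroPattern_eq_biInter]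
  exact .biInter (s ∪ t).countable_toSet fun i _ => hmeas i .of_discrete

lemma measurableSet_noLaterRun (hmeas : ∀ i, Measurable (X i)) (m : ℕ) :
    MeasurableSet (noLaterRun X m) := by
  refine .biInter (Icc 2 m).countable_toSet fun n _ => .compl ?_
  rw [contamRun_one_eq_biUnion]
  exact .biUnion (Ico n (n + m)).countable_toSet fun a _ => measurableSet_zeroPattern hmeas _ _

lemma measureReal_zeroPattern (hindep : iIndepFun X μ) (hmeas : ∀ i, Measurable (X i))
    (hX : ∀ i, μ.real {ω | X i ω = true} = p) (ht : t ⊆ s) :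
    μ.real (zeroPattern X s t) = p ^ (#s - #t) * (1 - p) ^ #t := by
  have hfactor : ∀ i ∈ s, μ.real (X i ⁻¹' {b | i ∈ s ∧ b = false ↔ i ∈ t}) =
      if i ∈ t then 1 - p else p := by
    intro i hi
    by_cases hit : i ∈ t
    · simp only [hi, hit, true_and, iff_true, if_true]
      rw [← hX i, ← probReal_compl_eq_one_sub (measurableSet_eq_fun (hmeas i) measurable_const)]
      congr 1
      ext ω
      simp
    · simp only [hi, hit, true_and, iff_false, if_false, Bool.not_eq_false]
      exact hX i
  rw [zeroPattern_eq_biInter, union_eq_left.mpr ht, measureReal_def,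
    hindep.measure_inter_preimage_eq_mul _ fun i _ => .of_discrete, ENNReal.toReal_prod]
  simp only [← measureReal_def]
  rw [prod_congr rfl hfactor, prod_ite, filter_mem_eq_inter, inter_eq_right.mpr ht,
    filter_notMem_eq_sdiff, prod_const, prod_const, card_sdiff_of_subset ht, mul_comm]

lemma measureReal_contamRun_one (hindep : iIndepFun X μ) (hmeas : ∀ i, Measurable (X i))
    (hX : ∀ i, μ.real {ω | X i ω = true} = p) (n m : ℕ) :
    μ.real (contamRun X 1 n m) = m * (p ^ (m - 1) * (1 - p)) := by
  rw [contamRun_one_eq_biUnion, measureReal_biUnion_finset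
      (fun a _ b _ hab => disjoint_zeroPattern (by simpa using hab))
      fun a _ => measurableSet_zeroPattern hmeas _ _,
    sum_congr rfl fun a ha =>
      measureReal_zeroPattern hindep hmeas hX (singleton_subset_iff.mpr ha)]
  simp

lemma measureReal_zeroPattern_inter_noLaterRun_of_lt (hindep : iIndepFun X μ)
    (hmeas : ∀ i, Measurable (X i)) (hX : ∀ i, μ.real {ω | X i ω = true} = p) {a : ℕ}
    (ha : 2 ≤ a) (ham : a < m) :
    μ.real (zeroPattern X (Ico 1 (m + 1)) {a} ∩ noLaterRun X m) =
      p ^ (m - 1) * (1 - p) ^ 2 - p ^ (m + a - 2) * (1 - p) ^ 2 := by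
  have hpair : ({a, m + 1} : Finset ℕ) ⊆ Ico 1 (m + 2) := by
    intro i; simp only [mem_insert, mem_singleton, mem_Ico]; omega
  have hlong : zeroPattern X (Ico 1 (m + a + 1)) {a, m + 1} ⊆
      zeroPattern X (Ico 1 (m + 2)) {a, m + 1} :=
    zeroPattern_subset (Ico_subset_Ico le_rfl (by omega)) (inter_eq_left.mpr hpair)
  rw [zeroPattern_inter_noLaterRun_of_lt ha ham,
    measureReal_sdiff hlong (measurableSet_zeroPattern hmeas _ _),
    measureReal_zeroPattern hindep hmeas hX hpair,
    measureReal_zeroPattern hindep hmeas hX (hpair.trans (Ico_subset_Ico le_rfl (by omega))),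
    card_pair (by omega)]
  simp only [Nat.card_Ico, show m + 2 - 1 - 2 = m - 1 by omega,
    show m + a + 1 - 1 - 2 = m + a - 2 by omega]

lemma measureReal_contamRun_one_inter_noLaterRun (hindep : iIndepFun X μ)
    (hmeas : ∀ i, Measurable (X i)) (hX : ∀ i, μ.real {ω | X i ω = true} = p) (hm : 2 ≤ m) :
    μ.real (contamRun X 1 1 m ∩ noLaterRun X m) =
      p ^ (m - 1) * (1 - p) * (m * (1 - p) + 2 * p ^ (m - 1) - 1) := by
  have hdecomp : contamRun X 1 1 m ∩ noLaterRun X m =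
      ⋃ a ∈ Ico 1 (m + 1), zeroPattern X (Ico 1 (m + 1)) {a} ∩ noLaterRun X m := by
    rw [contamRun_one_eq_biUnion, add_comm 1 m, Set.iUnion₂_inter]
  rw [hdecomp, measureReal_biUnion_finset
      (fun a _ b _ hab => (disjoint_zeroPattern (by simpa using hab)).mono
        Set.inter_subset_left Set.inter_subset_left)
      fun a _ => (measurableSet_zeroPattern hmeas _ _).inter (measurableSet_noLaterRun hmeas m),
    sum_eq_sum_Ico_succ_bot (by omega), sum_Ico_succ_top hm,
    sum_congr rfl fun a ha => measureReal_zeroPattern_inter_noLaterRun_of_lt hindep hmeas hX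
      (mem_Ico.mp ha).1 (mem_Ico.mp ha).2,
    zeroPattern_one_inter_noLaterRun hm, zeroPattern_last_inter_noLaterRun hm,
    measureReal_zeroPattern hindep hmeas hX
      (singleton_subset_iff.mpr (mem_Ico.mpr ⟨le_rfl, by omega⟩)),
    measureReal_zeroPattern hindep hmeas hX
      (by intro i; simp only [mem_insert, mem_singleton, mem_Ico]; omega),
    card_pair (by omega)]
  simp only [Nat.card_Ico, card_singleton, pow_one, show 2 * m - 1 - 1 = 2 * m - 2 by omega,
    show m + 2 - 1 - 2 = m - 1 by omega]
  exact isolatedRun_sum_identity p hm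

end Probability

theorem stmt1 {Ω : Type*} [MeasurableSpace Ω] (μ : Measure Ω) [IsProbabilityMeasure μ]
    (X : ℕ → Ω → Bool) (hmeas : ∀ i, Measurable (X i))
    (hindep : iIndepFun X μ)
    (p q : ℝ) (hp : 0 < p) (hp1 : p < 1) (hq : q = 1 - p)
    (hX : ∀ i, μ {ω | X i ω = true} = ENNReal.ofReal p)
    (m : ℕ) (hm : 2 ≤ m) :
    (μ (contamRun X 1 1 m ∩ ⋂ n ∈ Finset.Icc 2 m, (contamRun X 1 n m)ᶜ)).toReal /
        (μ (contamRun X 1 1 m)).toReal =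
      q + (2 * p ^ (m - 1) - 1) / m := by
  subst hq
  have hXreal : ∀ i, μ.real {ω | X i ω = true} = p := fun i => by
    rw [measureReal_def, hX i, ENNReal.toReal_ofReal hp.le]
  change μ.real (contamRun X 1 1 m ∩ noLaterRun X m) / μ.real (contamRun X 1 1 m) = _
  rw [measureReal_contamRun_one_inter_noLaterRun hindep hmeas hXreal hm,
    measureReal_contamRun_one hindep hmeas hXreal]
  have hpow : p ^ (m - 1) ≠ 0 := pow_ne_zero _ hp.ne'
  have hq : 1 - p ≠ 0 := by linarith
  have hm0 : (m : ℝ) ≠ 0 := by positivity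
  field_simp
  ring
end

section
/- Let 0<p<1, q=1-p, T ≥ 1 fixed, c = ln(1/p), and let m(N) be defined as in the paper's Theorem 2.2 (formula (2.2)). Set m = ⌊m(N)⌋ + k for a fixed integer k. Then there exist constants 0 < K₁ ≤ K₂ < ∞ such that K₁ ≤ N·m^T·p^m ≤ K₂ for all sufficiently large N. -/
open Filter

/-- `log_{1/p}(qN)`. -/
noncomputable def LqN (p q : ℝ) (N : ℕ) : ℝ := Real.logb (1 / p) (q * N)

/-- `log_{1/p}(log_{1/p}(qN))`. -/
noncomputable def LLqN (p q : ℝ) (N : ℕ) : ℝ := Real.logb (1 / p) (LqN p q N)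

/-- The centering sequence `m(N)` of formula (2.2) of the paper. -/
noncomputable def mSeq (p q : ℝ) (T : ℕ) (N : ℕ) : ℝ :=
  let c : ℝ := Real.log (1 / p)
  let q0 : ℝ := 2 * q / (2 + T * q - q)
  let L : ℝ := LqN p q N
  let LL : ℝ := LLqN p q N
  L + T * LL + T ^ 2 * LL / (c * L) - T / (c * q0 * L) - T ^ 3 / (2 * c) * (LL / L) ^ 2 +
    T ^ 2 * LL / (c * q0 * L ^ 2) + T ^ 3 * LL / (c * L) ^ 2 +
    (T * Real.logb (1 / p) (q / p) - Real.logb (1 / p) (T.factorial)) *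
      (1 + T / (c * L) - T ^ 2 * LL / (c * L ^ 2))

set_option maxHeartbeats 1600000 in
theorem stmt16 (p q : ℝ) (hp : 0 < p) (hp1 : p < 1) (hq : q = 1 - p)
    (T : ℕ) (hT : 1 ≤ T) (k : ℤ) :
    ∃ K₁ K₂ : ℝ, 0 < K₁ ∧ K₁ ≤ K₂ ∧ ∃ M : ℕ, ∀ N : ℕ, M ≤ N →
      K₁ ≤ (N : ℝ) * ((⌊mSeq p q T N⌋ + k : ℤ) : ℝ) ^ T * p ^ (⌊mSeq p q T N⌋ + k) ∧
        (N : ℝ) * ((⌊mSeq p q T N⌋ + k : ℤ) : ℝ) ^ T * p ^ (⌊mSeq p q T N⌋ + k) ≤ K₂ := by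
  have hq0 : 0 < q := by rw [hq]; linarith
  have hb : (1:ℝ) < 1 / p := (one_lt_div hp).mpr hp1
  have hT1 : (1:ℝ) ≤ (T:ℝ) := by exact_mod_cast hT
  set c : ℝ := Real.log (1 / p) with hcdef
  have hc : 0 < c := Real.log_pos hb
  set q₀ : ℝ := 2 * q / (2 + T * q - q) with hq₀def
  have hq₀ : 0 < q₀ := by
    apply div_pos (by linarith)
    nlinarith
  set A : ℝ := T * Real.logb (1/p) (q/p) - Real.logb (1/p) (T.factorial) with hAdef
  set L : ℕ → ℝ := fun N => LqN p q N with hL_def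
  set LL : ℕ → ℝ := fun N => LLqN p q N with hLL_def
  set E : ℕ → ℝ := fun N => mSeq p q T N - L N - T * LL N with hEdef
  have hmdef : ∀ N, mSeq p q T N = L N + T * LL N + E N := by
    intro N; simp only [hEdef]; ring
  have hLeq : ∀ N, L N = Real.log (q * N) / c := by
    intro N; simp [hL_def, LqN, Real.logb, hcdef]
  have hLLeq : ∀ N, LL N = Real.log (L N) / c := by
    intro N; simp [hLL_def, hL_def, LLqN, Real.logb, hcdef]
  have hNtop : Tendsto (fun N : ℕ => (N:ℝ)) atTop atTop := tendsto_natCast_atTop_atTop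
  have hqN : Tendsto (fun N : ℕ => q * (N:ℝ)) atTop atTop := hNtop.const_mul_atTop hq0
  have hLtop : Tendsto L atTop atTop := by
    have := (Real.tendsto_log_atTop.comp hqN).atTop_div_const hc
    apply this.congr; intro N; simp [hLeq N, Function.comp]
  have hLLtop : Tendsto LL atTop atTop := by
    have := (Real.tendsto_log_atTop.comp hLtop).atTop_div_const hc
    apply this.congr; intro N; simp [hLLeq N, Function.comp]
  have hy : Tendsto (fun N => (L N)⁻¹) atTop (nhds 0) := hLtop.inv_tendsto_atTop
  have hx : Tendsto (fun N => LL N / L N) atTop (nhds 0) := by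
    have h1 : Tendsto (fun x : ℝ => Real.log x / x) atTop (nhds 0) :=
      Real.isLittleO_log_id_atTop.tendsto_div_nhds_zero
    have h2 := (h1.comp hLtop).div_const c
    refine Tendsto.congr (fun N => ?_) (by simpa using h2)
    rw [hLLeq N, div_right_comm]
  -- limit of the correction term E
  have hEG : ∀ᶠ N in atTop, E N =
      (T:ℝ)^2/c * (LL N / L N) - (T:ℝ)/(c*q₀) * (L N)⁻¹
        - (T:ℝ)^3/(2*c) * ((LL N / L N) * (LL N / L N))
        + (T:ℝ)^2/(c*q₀) * ((LL N / L N) * (L N)⁻¹)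
        + (T:ℝ)^3/c^2 * ((LL N / L N) * (L N)⁻¹)
        + A * (1 + (T:ℝ)/c * (L N)⁻¹ - (T:ℝ)^2/c * ((LL N / L N) * (L N)⁻¹)) := by
    filter_upwards [hLtop.eventually_ge_atTop 1] with N hLN
    have hL0 : L N ≠ 0 := by linarith
    simp only [hEdef, mSeq, ← hcdef, ← hq₀def, ← hAdef, ← hL_def, ← hLL_def]
    field_simp
    ring
  have hE : Tendsto E atTop (nhds A) := by
    have t1 := hx.const_mul ((T:ℝ)^2/c)
    have t2 := hy.const_mul ((T:ℝ)/(c*q₀))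
    have t3 := (hx.mul hx).const_mul ((T:ℝ)^3/(2*c))
    have t4 := (hx.mul hy).const_mul ((T:ℝ)^2/(c*q₀))
    have t5 := (hx.mul hy).const_mul ((T:ℝ)^3/c^2)
    have t6 := (((tendsto_const_nhds (x := (1:ℝ))).add
      (hy.const_mul ((T:ℝ)/c))).sub ((hx.mul hy).const_mul ((T:ℝ)^2/c))).const_mul A
    have hcomb := ((((t1.sub t2).sub t3).add t4).add t5).add t6
    refine Tendsto.congr' (EventuallyEq.symm hEG) ?_
    simpa using hcomb
  -- mSeq / L → 1
  have hmL : Tendsto (fun N => mSeq p q T N / L N) atTop (nhds 1) := by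
    have hcomb := ((tendsto_const_nhds (x := (1:ℝ))).add (hx.const_mul (T:ℝ))).add (hE.mul hy)
    refine Tendsto.congr' ?_ (by simpa using hcomb)
    filter_upwards [hLtop.eventually_ge_atTop 1] with N hLN
    have hL0 : L N ≠ 0 := by linarith
    rw [hmdef N]
    field_simp
  -- mSeq → ∞
  have hmTop : Tendsto (fun N => mSeq p q T N) atTop atTop := by
    have base : Tendsto (fun N => L N + (A - 1)) atTop atTop :=
      tendsto_atTop_add_const_right _ _ hLtop
    refine tendsto_atTop_mono' _ ?_ base
    filter_upwards [hE.eventually (eventually_ge_nhds (sub_one_lt A)),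
      hLLtop.eventually_ge_atTop 0] with N h1 h2
    rw [hmdef N]
    nlinarith
  -- (mSeq + k)/L → 1 and (mSeq + k - 1)/L → 1
  have haux : ∀ r : ℝ, Tendsto (fun N => (mSeq p q T N + r) / L N) atTop (nhds 1) := by
    intro r
    have hcomb := hmL.add (hy.const_mul r)
    rw [mul_zero, add_zero] at hcomb
    refine Tendsto.congr' ?_ hcomb
    filter_upwards [hLtop.eventually_ge_atTop 1] with N hLN
    have hL0 : L N ≠ 0 := by linarith
    ring
  have hlog : ∀ r : ℝ, Tendsto (fun N => Real.log ((mSeq p q T N + r) / L N)) atTop (nhds 0) := by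
    intro r
    have := (Real.continuousAt_log one_ne_zero).tendsto.comp (haux r)
    rw [Real.log_one] at this
    exact this
  -- the identity for the exponent bounds
  have hkey : ∀ r : ℝ, Tendsto
      (fun N : ℕ => Real.log (N:ℝ) + (T:ℝ) * Real.log (mSeq p q T N + r) - c * mSeq p q T N)
      atTop (nhds (-Real.log q - c * A)) := by
    intro r
    have hcomb := (((tendsto_const_nhds (x := -Real.log q)).add ((hlog r).const_mul (T:ℝ))).sub (hE.const_mul c))
    rw [mul_zero, add_zero] at hcomb
    refine Tendsto.congr' ?_ hcomb
    filter_upwards [hLtop.eventually_ge_atTop 1, eventually_ge_atTop 1,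
      hmTop.eventually_ge_atTop (|r| + 1)] with N hLN hN1 hmN
    have hL0 : L N ≠ 0 := by linarith
    have hNpos : (0:ℝ) < (N:ℕ) := by exact_mod_cast Nat.lt_of_lt_of_le Nat.zero_lt_one hN1
    have hmk : (0:ℝ) < mSeq p q T N + r := by
      have := neg_abs_le r; linarith
    have e1 : Real.log (N:ℕ) = c * L N - Real.log q := by
      rw [hLeq N, mul_div_cancel₀ _ hc.ne', Real.log_mul hq0.ne' hNpos.ne']; ring
    have e2 : Real.log (L N) = c * LL N := by
      rw [hLLeq N, mul_div_cancel₀ _ hc.ne']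
    have e3 : Real.log (mSeq p q T N + r) =
        Real.log ((mSeq p q T N + r) / L N) + Real.log (L N) := by
      rw [Real.log_div hmk.ne' hL0]; ring
    rw [e1, e3, e2, hmdef N]
    ring
  -- the two limits
  have hUlim : Tendsto
      (fun N : ℕ => Real.log (N:ℝ) + (T:ℝ) * Real.log (mSeq p q T N + k) - c * (mSeq p q T N + k - 1))
      atTop (nhds (-Real.log q - c * A - c * ((k:ℝ) - 1))) := by
    have := (hkey (k:ℝ)).sub (tendsto_const_nhds (x := c * ((k:ℝ) - 1)))
    refine Tendsto.congr (fun N => ?_) this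
    ring
  have hVlim : Tendsto
      (fun N : ℕ => Real.log (N:ℝ) + (T:ℝ) * Real.log (mSeq p q T N + k - 1) - c * (mSeq p q T N + k))
      atTop (nhds (-Real.log q - c * A - c * (k:ℝ))) := by
    have := (hkey ((k:ℝ) - 1)).sub (tendsto_const_nhds (x := c * (k:ℝ)))
    refine Tendsto.congr (fun N => ?_) this
    ring_nf
  set ℓU : ℝ := -Real.log q - c * A - c * ((k:ℝ) - 1) with hℓU
  set ℓV : ℝ := -Real.log q - c * A - c * (k:ℝ) with hℓV
  have evU := hUlim.eventually (eventually_le_nhds (lt_add_one ℓU))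
  have evV := hVlim.eventually (eventually_ge_nhds (sub_one_lt ℓV))
  have evm := hmTop.eventually_ge_atTop (|(k:ℝ)| + 2)
  have evN : ∀ᶠ N : ℕ in atTop, 1 ≤ N := eventually_ge_atTop 1
  obtain ⟨M, hM⟩ := eventually_atTop.mp (((evU.and evV).and (evm.and evN)))
  refine ⟨Real.exp (ℓV - 1), Real.exp (ℓU + 1), Real.exp_pos _,
    Real.exp_le_exp.mpr (by rw [hℓU, hℓV]; nlinarith), M, ?_⟩
  intro N hN
  obtain ⟨⟨h1, h2⟩, h3, h4⟩ := hM N hN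
  set x : ℝ := mSeq p q T N with hxdef
  set m : ℤ := ⌊mSeq p q T N⌋ + k with hmdef'
  have hm_le : (m:ℝ) ≤ x + k := by
    have := Int.floor_le x
    push_cast [hmdef']
    linarith
  have hm_ge : x + k - 1 ≤ (m:ℝ) := by
    have := Int.sub_one_lt_floor x
    push_cast [hmdef']
    linarith
  have hkabs : -|(k:ℝ)| ≤ (k:ℝ) := neg_abs_le _
  have hm1 : (1:ℝ) ≤ (m:ℝ) := by linarith
  have hmpos : (0:ℝ) < (m:ℝ) := by linarith
  have hxk1 : (0:ℝ) < x + k - 1 := by linarith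
  have hxk : (0:ℝ) < x + k := by linarith
  have hNpos : (0:ℝ) < (N:ℕ) := by
    have : (1:ℝ) ≤ (N:ℕ) := by exact_mod_cast h4
    linarith
  have hfexp : (N : ℝ) * ((m : ℤ) : ℝ) ^ T * p ^ (m : ℤ) =
      Real.exp (Real.log N + (T:ℝ) * Real.log m - c * m) := by
    have hpm : p ^ (m:ℤ) = Real.exp (-(c * (m:ℝ))) := by
      rw [← Real.rpow_intCast p m, Real.rpow_def_of_pos hp]
      have hlogp : Real.log p = -c := by
        rw [hcdef, one_div, Real.log_inv, neg_neg]
      rw [hlogp]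
      ring_nf
    have hmT : ((m:ℤ):ℝ) ^ T = Real.exp ((T:ℝ) * Real.log (m:ℝ)) := by
      rw [Real.exp_nat_mul, Real.exp_log hmpos]
    rw [hpm, hmT]
    rw [show Real.log (N:ℝ) + (T:ℝ) * Real.log (m:ℝ) - c * (m:ℝ)
        = Real.log (N:ℝ) + ((T:ℝ) * Real.log (m:ℝ) + -(c * (m:ℝ))) from by ring]
    rw [Real.exp_add, Real.exp_add, Real.exp_log hNpos]
    ring
  have hTnn : (0:ℝ) ≤ (T:ℝ) := by positivity
  have hUb : Real.log N + (T:ℝ) * Real.log m - c * m ≤ ℓU + 1 := by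
    have l1 : Real.log (m:ℝ) ≤ Real.log (x + k) := Real.log_le_log hmpos hm_le
    have l2 : (T:ℝ) * Real.log (m:ℝ) ≤ (T:ℝ) * Real.log (x + k) :=
      mul_le_mul_of_nonneg_left l1 hTnn
    have l3 : c * (x + k - 1) ≤ c * (m:ℝ) := mul_le_mul_of_nonneg_left hm_ge hc.le
    calc Real.log N + (T:ℝ) * Real.log m - c * m
        ≤ Real.log N + (T:ℝ) * Real.log (x + k) - c * (x + k - 1) := by linarith
      _ ≤ ℓU + 1 := h1
  have hVb : ℓV - 1 ≤ Real.log N + (T:ℝ) * Real.log m - c * m := by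
    have l1 : Real.log (x + k - 1) ≤ Real.log (m:ℝ) := Real.log_le_log hxk1 hm_ge
    have l2 : (T:ℝ) * Real.log (x + k - 1) ≤ (T:ℝ) * Real.log (m:ℝ) :=
      mul_le_mul_of_nonneg_left l1 hTnn
    have l3 : c * (m:ℝ) ≤ c * (x + k) := mul_le_mul_of_nonneg_left hm_le hc.le
    calc ℓV - 1 ≤ Real.log N + (T:ℝ) * Real.log (x + k - 1) - c * (x + k) := h2
      _ ≤ Real.log N + (T:ℝ) * Real.log m - c * m := by linarith
  constructor
  · rw [hfexp]
    exact Real.exp_le_exp.mpr hVb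
  · rw [hfexp]
    exact Real.exp_le_exp.mpr hUb
end
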